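/- arXiv:2506.11242 — 8 statements merged into one kernel-verified Lean document; each statement's English description precedes it below -/
import Mathlib

section
/- For all n ∈ ℕ and x ∈ X, the direct impact of the policy satisfies V n x − V_PS n x = ∑_{k=0}^{n−1} ∑_{x'} ρ^k(x,x') · (p x') · Δ(x'). (Proposition 1, first identity: the difference between the value of the behavior policy and the path-specific value equals the visitation-probability-weighted sum of the probability of positive decision times the benefit.) -/
open Finset

/-- Proposition 1, first identity: the direct impact of the
policy satisfies
`V n x − V_PS n x = ∑_{k<n} ∑_{x'} ρ^k(x,x') · (p x') · Δ(x')`. -/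
theorem direct_policy_impact {X : Type*} [Fintype X] [Nonempty X] [DecidableEq X]
    -- transition kernel
    (P : X → Bool → X → ℝ)
    (hPnonneg : ∀ (x : X) (d : Bool) (x' : X), 0 ≤ P x d x')
    (hPsum : ∀ (x : X) (d : Bool), ∑ x', P x d x' = 1)
    -- policy
    (p : X → ℝ) (hp0 : ∀ x, 0 ≤ p x) (hp1 : ∀ x, p x ≤ 1)
    -- qualification gain function
    (g : X → X → ℝ)
    -- one-step mixed kernel
    (ρ : X → X → ℝ)
    (hρ : ∀ x x', ρ x x' = (1 - p x) * P x false x' + p x * P x true x')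
    -- benefit
    (Δ : X → ℝ) (hΔ : ∀ x, Δ x = ∑ x', (P x true x' - P x false x') * g x x')
    -- baseline one-step gain
    (c : X → ℝ) (hc : ∀ x, c x = ∑ x', P x false x' * g x x')
    -- k-step kernels
    (ρk : ℕ → X → X → ℝ)
    (hρk0 : ∀ x x', ρk 0 x x' = if x = x' then 1 else 0)
    (hρkS : ∀ (k : ℕ) (x x' : X), ρk (k + 1) x x' = ∑ y, ρ x y * ρk k y x')
    -- finite-horizon state value function
    (V : ℕ → X → ℝ) (hV0 : ∀ x, V 0 x = 0)
    (hVS : ∀ (n : ℕ) (x : X), V (n + 1) x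
      = ∑ d : Bool, (if d then p x else 1 - p x) * ∑ x', P x d x' * (g x x' + V n x'))
    -- path-specific value function
    (VPS : ℕ → X → ℝ) (hVPS0 : ∀ x, VPS 0 x = 0)
    (hVPSS : ∀ (n : ℕ) (x : X), VPS (n + 1) x = c x + ∑ x', ρ x x' * VPS n x') :
    ∀ (n : ℕ) (x : X),
      V n x - VPS n x = ∑ k ∈ Finset.range n, ∑ x', ρk k x x' * (p x' * Δ x') := by

  intro n
  induction n with
  | zero => intro x; simp [hV0, hVPS0]
  | succ n ih =>
    intro x
    have key : V (n + 1) x - VPS (n + 1) x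
        = p x * Δ x + ∑ x', ρ x x' * (V n x' - VPS n x') := by
      rw [hVS, hVPSS, Fintype.sum_bool, hc, hΔ]
      simp only [if_true, if_false, hρ, Finset.mul_sum, mul_sub,
        ← Finset.sum_sub_distrib, ← Finset.sum_add_distrib]
      refine Finset.sum_congr rfl fun x' _ => by
        simp only [Bool.false_eq_true, if_false]; ring
    rw [key]
    have step : ∀ x', V n x' - VPS n x'
        = ∑ k ∈ Finset.range n, ∑ y, ρk k x' y * (p y * Δ y) := ih
    simp only [step, Finset.mul_sum]
    rw [Finset.sum_comm]
    have h1 : ∀ k, (∑ x', ∑ y, ρ x x' * (ρk k x' y * (p y * Δ y)))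
        = ∑ y, ρk (k + 1) x y * (p y * Δ y) := by
      intro k
      rw [Finset.sum_comm]
      refine Finset.sum_congr rfl fun y _ => ?_
      rw [hρkS, Finset.sum_mul]
      refine Finset.sum_congr rfl fun x' _ => by ring
    simp only [h1]
    rw [Finset.sum_range_succ']
    have h0 : (∑ y, ρk 0 x y * (p y * Δ y)) = p x * Δ x := by
      simp [hρk0]
    rw [h0]
    ring
end

section
/- For all n ∈ ℕ and x ∈ X, the delayed impact of the policy satisfies V_PS n x − V₀ n x = ∑_{k=0}^{n−1} ∑_{x'} (ρ^k(x,x') − ρ₀^k(x,x')) · c(x'). (Proposition 1, second identity: the difference between the path-specific value and the baseline-policy value equals the difference of k-step visitation probabilities under the behavior and baseline policies, weighted by the baseline one-step gain.) -/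
open Finset

private lemma value_repr {X : Type*} [Fintype X] [DecidableEq X]
    (ρ : X → X → ℝ) (c : X → ℝ)
    (ρk : ℕ → X → X → ℝ)
    (hρk0 : ∀ x x', ρk 0 x x' = if x = x' then 1 else 0)
    (hρkS : ∀ (k : ℕ) (x x' : X), ρk (k + 1) x x' = ∑ y, ρ x y * ρk k y x')
    (V : ℕ → X → ℝ) (hV0 : ∀ x, V 0 x = 0)
    (hVS : ∀ (n : ℕ) (x : X), V (n + 1) x = c x + ∑ x', ρ x x' * V n x') :
    ∀ (n : ℕ) (x : X), V n x = ∑ k ∈ Finset.range n, ∑ x', ρk k x x' * c x' := by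
  intro n
  induction n with
  | zero => intro x; simp [hV0]
  | succ n ih =>
    intro x
    rw [hVS, Finset.sum_range_succ']
    have h0 : ∑ x', ρk 0 x x' * c x' = c x := by
      simp [hρk0, Finset.sum_ite_eq]
    rw [h0]
    have : ∑ x', ρ x x' * V n x'
        = ∑ k ∈ Finset.range n, ∑ x', ρk (k + 1) x x' * c x' := by
      simp only [ih, Finset.mul_sum]
      rw [Finset.sum_comm]
      refine Finset.sum_congr rfl fun k _ => ?_
      simp only [hρkS, Finset.sum_mul]
      rw [Finset.sum_comm]
      refine Finset.sum_congr rfl fun y _ => Finset.sum_congr rfl fun x' _ => ?_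
      ring
    rw [this]; ring


/-- Proposition 1, second identity: the delayed impact of the
policy satisfies
`V_PS n x − V₀ n x = ∑_{k<n} ∑_{x'} (ρ^k(x,x') − ρ₀^k(x,x')) · c(x')`. -/
theorem delayed_policy_impact {X : Type*} [Fintype X] [Nonempty X] [DecidableEq X]
    -- transition kernel
    (P : X → Bool → X → ℝ)
    (hPnonneg : ∀ (x : X) (d : Bool) (x' : X), 0 ≤ P x d x')
    (hPsum : ∀ (x : X) (d : Bool), ∑ x', P x d x' = 1)
    -- policy
    (p : X → ℝ) (hp0 : ∀ x, 0 ≤ p x) (hp1 : ∀ x, p x ≤ 1)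
    -- qualification gain function
    (g : X → X → ℝ)
    -- one-step mixed kernel and baseline kernel
    (ρ : X → X → ℝ)
    (hρ : ∀ x x', ρ x x' = (1 - p x) * P x false x' + p x * P x true x')
    (ρ₀ : X → X → ℝ) (hρ₀ : ∀ x x', ρ₀ x x' = P x false x')
    -- baseline one-step gain
    (c : X → ℝ) (hc : ∀ x, c x = ∑ x', P x false x' * g x x')
    -- k-step kernels
    (ρk : ℕ → X → X → ℝ)
    (hρk0 : ∀ x x', ρk 0 x x' = if x = x' then 1 else 0)
    (hρkS : ∀ (k : ℕ) (x x' : X), ρk (k + 1) x x' = ∑ y, ρ x y * ρk k y x')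
    (ρ₀k : ℕ → X → X → ℝ)
    (hρ₀k0 : ∀ x x', ρ₀k 0 x x' = if x = x' then 1 else 0)
    (hρ₀kS : ∀ (k : ℕ) (x x' : X), ρ₀k (k + 1) x x' = ∑ y, ρ₀ x y * ρ₀k k y x')
    -- path-specific value function
    (VPS : ℕ → X → ℝ) (hVPS0 : ∀ x, VPS 0 x = 0)
    (hVPSS : ∀ (n : ℕ) (x : X), VPS (n + 1) x = c x + ∑ x', ρ x x' * VPS n x')
    -- baseline value function
    (V₀ : ℕ → X → ℝ) (hV₀0 : ∀ x, V₀ 0 x = 0)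
    (hV₀S : ∀ (n : ℕ) (x : X), V₀ (n + 1) x = c x + ∑ x', ρ₀ x x' * V₀ n x') :
    ∀ (n : ℕ) (x : X),
      VPS n x - V₀ n x
        = ∑ k ∈ Finset.range n, ∑ x', (ρk k x x' - ρ₀k k x x') * c x' := by
  intro n x
  rw [value_repr ρ c ρk hρk0 hρkS VPS hVPS0 hVPSS n x,
      value_repr ρ₀ c ρ₀k hρ₀k0 hρ₀kS V₀ hV₀0 hV₀S n x,
      ← Finset.sum_sub_distrib]
  refine Finset.sum_congr rfl fun k _ => ?_
  rw [← Finset.sum_sub_distrib]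
  exact Finset.sum_congr rfl fun x' _ => by ring
end

section
/- For all n ∈ ℕ and x ∈ X, the finite-horizon value function decomposes into direct impact, delayed impact, and spurious effect: V n x = [∑_{k=0}^{n−1} ∑_{x'} ρ^k(x,x')·(p x')·Δ(x')] + [∑_{k=0}^{n−1} ∑_{x'} (ρ^k(x,x') − ρ₀^k(x,x'))·c(x')] + [∑_{k=0}^{n−1} ∑_{x'} ρ₀^k(x,x')·c(x')], where the first bracket equals V n x − V_PS n x (direct impact), the second equals V_PS n x − V₀ n x (delayed impact), and the third equals V₀ n x (spurious effect). -/
open Finset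

lemma rec_sum_formula {X : Type*} [Fintype X] [DecidableEq X]
    (K : X → X → ℝ) (Kk : ℕ → X → X → ℝ)
    (hK0 : ∀ x x', Kk 0 x x' = if x = x' then 1 else 0)
    (hKS : ∀ (k : ℕ) (x x' : X), Kk (k + 1) x x' = ∑ y, K x y * Kk k y x')
    (f : X → ℝ) (W : ℕ → X → ℝ) (hW0 : ∀ x, W 0 x = 0)
    (hWS : ∀ (n : ℕ) (x : X), W (n + 1) x = f x + ∑ x', K x x' * W n x') :
    ∀ (n : ℕ) (x : X), W n x = ∑ k ∈ Finset.range n, ∑ x', Kk k x x' * f x' := by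
  intro n
  induction n with
  | zero => intro x; simp [hW0]
  | succ n ih =>
    intro x
    rw [hWS, Finset.sum_range_succ']
    have h0 : ∑ x', Kk 0 x x' * f x' = f x := by
      simp [hK0]
    rw [h0]
    have h1 : ∀ k ∈ Finset.range n, ∑ x', Kk (k + 1) x x' * f x'
        = ∑ y, K x y * (∑ x', Kk k y x' * f x') := by
      intro k _
      simp only [hKS, Finset.sum_mul, Finset.mul_sum]
      rw [Finset.sum_comm]
      simp [mul_assoc]
    rw [Finset.sum_congr rfl h1, add_comm]
    congr 1
    symm
    calc ∑ k ∈ Finset.range n, ∑ y, K x y * (∑ x', Kk k y x' * f x')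
        = ∑ y, ∑ k ∈ Finset.range n, K x y * (∑ x', Kk k y x' * f x') :=
          Finset.sum_comm
      _ = ∑ y, K x y * W n y := by
          refine Finset.sum_congr rfl fun y _ => ?_
          rw [ih y, Finset.mul_sum]

/-- the finite-horizon value function decomposes into direct
impact, delayed impact, and spurious effect, with each bracket identified
with the corresponding difference of value functions. -/
theorem value_decomposition {X : Type*} [Fintype X] [Nonempty X] [DecidableEq X]
    -- transition kernel
    (P : X → Bool → X → ℝ)
    (hPnonneg : ∀ (x : X) (d : Bool) (x' : X), 0 ≤ P x d x')
    (hPsum : ∀ (x : X) (d : Bool), ∑ x', P x d x' = 1)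
    -- policy
    (p : X → ℝ) (hp0 : ∀ x, 0 ≤ p x) (hp1 : ∀ x, p x ≤ 1)
    -- qualification gain function
    (g : X → X → ℝ)
    -- one-step mixed kernel and baseline kernel
    (ρ : X → X → ℝ)
    (hρ : ∀ x x', ρ x x' = (1 - p x) * P x false x' + p x * P x true x')
    (ρ₀ : X → X → ℝ) (hρ₀ : ∀ x x', ρ₀ x x' = P x false x')
    -- benefit and baseline one-step gain
    (Δ : X → ℝ) (hΔ : ∀ x, Δ x = ∑ x', (P x true x' - P x false x') * g x x')
    (c : X → ℝ) (hc : ∀ x, c x = ∑ x', P x false x' * g x x')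
    -- k-step kernels
    (ρk : ℕ → X → X → ℝ)
    (hρk0 : ∀ x x', ρk 0 x x' = if x = x' then 1 else 0)
    (hρkS : ∀ (k : ℕ) (x x' : X), ρk (k + 1) x x' = ∑ y, ρ x y * ρk k y x')
    (ρ₀k : ℕ → X → X → ℝ)
    (hρ₀k0 : ∀ x x', ρ₀k 0 x x' = if x = x' then 1 else 0)
    (hρ₀kS : ∀ (k : ℕ) (x x' : X), ρ₀k (k + 1) x x' = ∑ y, ρ₀ x y * ρ₀k k y x')
    -- finite-horizon state value function
    (V : ℕ → X → ℝ) (hV0 : ∀ x, V 0 x = 0)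
    (hVS : ∀ (n : ℕ) (x : X), V (n + 1) x
      = ∑ d : Bool, (if d then p x else 1 - p x) * ∑ x', P x d x' * (g x x' + V n x'))
    -- path-specific value function
    (VPS : ℕ → X → ℝ) (hVPS0 : ∀ x, VPS 0 x = 0)
    (hVPSS : ∀ (n : ℕ) (x : X), VPS (n + 1) x = c x + ∑ x', ρ x x' * VPS n x')
    -- baseline value function
    (V₀ : ℕ → X → ℝ) (hV₀0 : ∀ x, V₀ 0 x = 0)
    (hV₀S : ∀ (n : ℕ) (x : X), V₀ (n + 1) x = c x + ∑ x', ρ₀ x x' * V₀ n x') :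
    ∀ (n : ℕ) (x : X),
      V n x
        = (∑ k ∈ Finset.range n, ∑ x', ρk k x x' * (p x' * Δ x'))
          + (∑ k ∈ Finset.range n, ∑ x', (ρk k x x' - ρ₀k k x x') * c x')
          + (∑ k ∈ Finset.range n, ∑ x', ρ₀k k x x' * c x') ∧
      (∑ k ∈ Finset.range n, ∑ x', ρk k x x' * (p x' * Δ x')) = V n x - VPS n x ∧
      (∑ k ∈ Finset.range n, ∑ x', (ρk k x x' - ρ₀k k x x') * c x') = VPS n x - V₀ n x ∧
      (∑ k ∈ Finset.range n, ∑ x', ρ₀k k x x' * c x') = V₀ n x := by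
  have hVrec : ∀ (n : ℕ) (x : X),
      V (n + 1) x = (fun x => c x + p x * Δ x) x + ∑ x', ρ x x' * V n x' := by
    intro n x
    rw [hVS]
    simp only [Fintype.sum_bool, Bool.false_eq_true, if_true, if_false, hc, hΔ, hρ, Finset.mul_sum,
      ← Finset.sum_add_distrib]
    refine Finset.sum_congr rfl fun x' _ => ?_
    ring
  have hVf := rec_sum_formula ρ ρk hρk0 hρkS (fun x => c x + p x * Δ x) V hV0 hVrec
  have hVPSf := rec_sum_formula ρ ρk hρk0 hρkS c VPS hVPS0 hVPSS
  have hV0f := rec_sum_formula ρ₀ ρ₀k hρ₀k0 hρ₀kS c V₀ hV₀0 hV₀S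
  intro n x
  have split1 : (∑ k ∈ Finset.range n, ∑ x', ρk k x x' * ((fun x => c x + p x * Δ x) x'))
      = (∑ k ∈ Finset.range n, ∑ x', ρk k x x' * c x')
        + (∑ k ∈ Finset.range n, ∑ x', ρk k x x' * (p x' * Δ x')) := by
    rw [← Finset.sum_add_distrib]
    refine Finset.sum_congr rfl fun k _ => ?_
    rw [← Finset.sum_add_distrib]
    exact Finset.sum_congr rfl fun x' _ => by ring
  have split2 : (∑ k ∈ Finset.range n, ∑ x', (ρk k x x' - ρ₀k k x x') * c x')
      = (∑ k ∈ Finset.range n, ∑ x', ρk k x x' * c x')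
        - (∑ k ∈ Finset.range n, ∑ x', ρ₀k k x x' * c x') := by
    rw [← Finset.sum_sub_distrib]
    refine Finset.sum_congr rfl fun k _ => ?_
    rw [← Finset.sum_sub_distrib]
    exact Finset.sum_congr rfl fun x' _ => by ring
  have hV := hVf n x
  rw [split1] at hV
  have hVPS := hVPSf n x
  have hV0' := hV0f n x
  refine ⟨by rw [split2]; linarith, by linarith, by rw [split2]; linarith, by linarith⟩
end

section
/- Given two groups s⁺ and s⁻, each with its own transition kernel P^±, policy p^±, gain function g^±, and initial distribution μ^± (with μ^± x ≥ 0 and ∑_x μ^± x = 1), define the qualification gain disparity C_n = ∑_x μ⁺ x · V⁺ n x − ∑_x μ⁻ x · V⁻ n x, and define DPE_n = ∑_{k=0}^{n−1}[∑_x (μ⁺ρ⁺^k)(x)·(p⁺ x)·Δ⁺(x) − ∑_x (μ⁻ρ⁻^k)(x)·(p⁻ x)·Δ⁻(x)], IPE_n = ∑_{k=0}^{n−1}[∑_x ((μ⁺ρ⁺^k)(x) − (μ⁺ρ₀⁺^k)(x))·c⁺(x) − ∑_x ((μ⁻ρ⁻^k)(x) − (μ⁻ρ₀⁻^k)(x))·c⁻(x)],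 and SPE_n = ∑_{k=0}^{n−1}[∑_x (μ⁺ρ₀⁺^k)(x)·c⁺(x) − ∑_x (μ⁻ρ₀⁻^k)(x)·c⁻(x)], where (μρ^k)(x) = ∑_{x₀} μ x₀ · ρ^k(x₀,x). Then for every n, C_n = DPE_n + IPE_n + SPE_n. -/
open Finset

lemma value_as_trajectory_sum {X : Type*} [Fintype X] [DecidableEq X]
    (P : X → Bool → X → ℝ) (p : X → ℝ) (g : X → X → ℝ)
    (ρ : X → X → ℝ)
    (hρ : ∀ x x', ρ x x' = (1 - p x) * P x false x' + p x * P x true x')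
    (ρk : ℕ → X → X → ℝ)
    (hρk0 : ∀ x x', ρk 0 x x' = if x = x' then 1 else 0)
    (hρkS : ∀ (k : ℕ) (x x' : X), ρk (k + 1) x x' = ∑ y, ρ x y * ρk k y x')
    (V : ℕ → X → ℝ) (hV0 : ∀ x, V 0 x = 0)
    (hVS : ∀ (n : ℕ) (x : X), V (n + 1) x
      = ∑ d : Bool, (if d then p x else 1 - p x) * ∑ x', P x d x' * (g x x' + V n x')) :
    ∀ (n : ℕ) (μ : X → ℝ),
      ∑ x, μ x * V n x
        = ∑ k ∈ Finset.range n, ∑ x, (∑ x₀, μ x₀ * ρk k x₀ x) * (∑ x', ρ x x' * g x x') := by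
  have hV : ∀ (n : ℕ) (x : X), V (n + 1) x
      = (∑ x', ρ x x' * g x x') + ∑ x', ρ x x' * V n x' := by
    intro n x
    rw [hVS, Fintype.sum_bool]
    simp only [if_true, Bool.false_eq_true, if_false]
    rw [← Finset.sum_add_distrib, Finset.mul_sum, Finset.mul_sum, ← Finset.sum_add_distrib]
    exact Finset.sum_congr rfl fun x' _ => by rw [hρ]; ring
  intro n
  induction n with
  | zero => intro μ; simp [hV0]
  | succ n ih =>
    intro μ
    have step : ∀ x' : X, ∑ x₀, μ x₀ * ρk 0 x₀ x' = μ x' := by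
      intro x'; simp [hρk0, mul_ite]
    have swap : ∑ x, μ x * ∑ x', ρ x x' * V n x' = ∑ x', (∑ x, μ x * ρ x x') * V n x' := by
      simp_rw [Finset.mul_sum, Finset.sum_mul]
      rw [Finset.sum_comm]
      exact Finset.sum_congr rfl fun a _ => Finset.sum_congr rfl fun b _ => by ring
    have compose : ∀ (k : ℕ) (x : X),
        ∑ x₀, (∑ y, μ y * ρ y x₀) * ρk k x₀ x = ∑ x₀, μ x₀ * ρk (k + 1) x₀ x := by
      intro k x
      simp_rw [hρkS, Finset.mul_sum, Finset.sum_mul]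
      rw [Finset.sum_comm]
      exact Finset.sum_congr rfl fun a _ => Finset.sum_congr rfl fun b _ => by ring
    calc ∑ x, μ x * V (n + 1) x
        = (∑ x, μ x * (∑ x', ρ x x' * g x x'))
          + ∑ x, μ x * ∑ x', ρ x x' * V n x' := by
          rw [← Finset.sum_add_distrib]
          exact Finset.sum_congr rfl fun x _ => by rw [hV, mul_add]
      _ = (∑ x, μ x * (∑ x', ρ x x' * g x x'))
          + ∑ k ∈ Finset.range n, ∑ x,
              (∑ x₀, (∑ y, μ y * ρ y x₀) * ρk k x₀ x) * (∑ x', ρ x x' * g x x') := by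
          rw [swap, ih (fun x' => ∑ x, μ x * ρ x x')]
      _ = ∑ k ∈ Finset.range (n + 1), ∑ x,
              (∑ x₀, μ x₀ * ρk k x₀ x) * (∑ x', ρ x x' * g x x') := by
          rw [Finset.sum_range_succ', add_comm]
          congr 1
          · refine Finset.sum_congr rfl fun k _ => Finset.sum_congr rfl fun x _ => ?_
            rw [compose]
          · exact Finset.sum_congr rfl fun x _ => by rw [step]

/-- the qualification gain disparity between two groups
decomposes as `C_n = DPE_n + IPE_n + SPE_n` (Direct, Indirect, and Spurious
Policy Effects). Group `s⁺` data carries suffix `p`, group `s⁻` suffix `m`. -/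
theorem disparity_decomposition {X : Type*} [Fintype X] [Nonempty X] [DecidableEq X]
    -- group s⁺ : transition kernel, policy, gain, initial distribution
    (Pp : X → Bool → X → ℝ)
    (hPpnonneg : ∀ (x : X) (d : Bool) (x' : X), 0 ≤ Pp x d x')
    (hPpsum : ∀ (x : X) (d : Bool), ∑ x', Pp x d x' = 1)
    (pp : X → ℝ) (hpp0 : ∀ x, 0 ≤ pp x) (hpp1 : ∀ x, pp x ≤ 1)
    (gp : X → X → ℝ)
    (μp : X → ℝ) (hμp0 : ∀ x, 0 ≤ μp x) (hμp1 : ∑ x, μp x = 1)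
    -- group s⁻ : transition kernel, policy, gain, initial distribution
    (Pm : X → Bool → X → ℝ)
    (hPmnonneg : ∀ (x : X) (d : Bool) (x' : X), 0 ≤ Pm x d x')
    (hPmsum : ∀ (x : X) (d : Bool), ∑ x', Pm x d x' = 1)
    (pm : X → ℝ) (hpm0 : ∀ x, 0 ≤ pm x) (hpm1 : ∀ x, pm x ≤ 1)
    (gm : X → X → ℝ)
    (μm : X → ℝ) (hμm0 : ∀ x, 0 ≤ μm x) (hμm1 : ∑ x, μm x = 1)
    -- group s⁺ : mixed/baseline kernels, benefit, baseline gain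
    (ρp : X → X → ℝ)
    (hρp : ∀ x x', ρp x x' = (1 - pp x) * Pp x false x' + pp x * Pp x true x')
    (ρ₀p : X → X → ℝ) (hρ₀p : ∀ x x', ρ₀p x x' = Pp x false x')
    (Δp : X → ℝ) (hΔp : ∀ x, Δp x = ∑ x', (Pp x true x' - Pp x false x') * gp x x')
    (cp : X → ℝ) (hcp : ∀ x, cp x = ∑ x', Pp x false x' * gp x x')
    -- group s⁻ : mixed/baseline kernels, benefit, baseline gain
    (ρm : X → X → ℝ)
    (hρm : ∀ x x', ρm x x' = (1 - pm x) * Pm x false x' + pm x * Pm x true x')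
    (ρ₀m : X → X → ℝ) (hρ₀m : ∀ x x', ρ₀m x x' = Pm x false x')
    (Δm : X → ℝ) (hΔm : ∀ x, Δm x = ∑ x', (Pm x true x' - Pm x false x') * gm x x')
    (cm : X → ℝ) (hcm : ∀ x, cm x = ∑ x', Pm x false x' * gm x x')
    -- group s⁺ : k-step kernels
    (ρkp : ℕ → X → X → ℝ)
    (hρkp0 : ∀ x x', ρkp 0 x x' = if x = x' then 1 else 0)
    (hρkpS : ∀ (k : ℕ) (x x' : X), ρkp (k + 1) x x' = ∑ y, ρp x y * ρkp k y x')
    (ρ₀kp : ℕ → X → X → ℝ)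
    (hρ₀kp0 : ∀ x x', ρ₀kp 0 x x' = if x = x' then 1 else 0)
    (hρ₀kpS : ∀ (k : ℕ) (x x' : X), ρ₀kp (k + 1) x x' = ∑ y, ρ₀p x y * ρ₀kp k y x')
    -- group s⁻ : k-step kernels
    (ρkm : ℕ → X → X → ℝ)
    (hρkm0 : ∀ x x', ρkm 0 x x' = if x = x' then 1 else 0)
    (hρkmS : ∀ (k : ℕ) (x x' : X), ρkm (k + 1) x x' = ∑ y, ρm x y * ρkm k y x')
    (ρ₀km : ℕ → X → X → ℝ)
    (hρ₀km0 : ∀ x x', ρ₀km 0 x x' = if x = x' then 1 else 0)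
    (hρ₀kmS : ∀ (k : ℕ) (x x' : X), ρ₀km (k + 1) x x' = ∑ y, ρ₀m x y * ρ₀km k y x')
    -- finite-horizon state value functions of the two groups
    (Vp : ℕ → X → ℝ) (hVp0 : ∀ x, Vp 0 x = 0)
    (hVpS : ∀ (n : ℕ) (x : X), Vp (n + 1) x
      = ∑ d : Bool, (if d then pp x else 1 - pp x) * ∑ x', Pp x d x' * (gp x x' + Vp n x'))
    (Vm : ℕ → X → ℝ) (hVm0 : ∀ x, Vm 0 x = 0)
    (hVmS : ∀ (n : ℕ) (x : X), Vm (n + 1) x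
      = ∑ d : Bool, (if d then pm x else 1 - pm x) * ∑ x', Pm x d x' * (gm x x' + Vm n x')) :
    ∀ n : ℕ,
      (∑ x, μp x * Vp n x) - (∑ x, μm x * Vm n x)
        = (∑ k ∈ Finset.range n,
            ((∑ x, (∑ x₀, μp x₀ * ρkp k x₀ x) * (pp x * Δp x))
              - ∑ x, (∑ x₀, μm x₀ * ρkm k x₀ x) * (pm x * Δm x)))
          + (∑ k ∈ Finset.range n,
            ((∑ x, ((∑ x₀, μp x₀ * ρkp k x₀ x) - (∑ x₀, μp x₀ * ρ₀kp k x₀ x)) * cp x)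
              - ∑ x, ((∑ x₀, μm x₀ * ρkm k x₀ x) - (∑ x₀, μm x₀ * ρ₀km k x₀ x)) * cm x))
          + (∑ k ∈ Finset.range n,
            ((∑ x, (∑ x₀, μp x₀ * ρ₀kp k x₀ x) * cp x)
              - ∑ x, (∑ x₀, μm x₀ * ρ₀km k x₀ x) * cm x)) := by
  
  intro n
  have hrp : ∀ x, (∑ x', ρp x x' * gp x x') = cp x + pp x * Δp x := by
    intro x
    rw [hcp, hΔp, Finset.mul_sum, ← Finset.sum_add_distrib]
    exact Finset.sum_congr rfl fun x' _ => by rw [hρp]; ring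
  have hrm : ∀ x, (∑ x', ρm x x' * gm x x') = cm x + pm x * Δm x := by
    intro x
    rw [hcm, hΔm, Finset.mul_sum, ← Finset.sum_add_distrib]
    exact Finset.sum_congr rfl fun x' _ => by rw [hρm]; ring
  rw [value_as_trajectory_sum Pp pp gp ρp hρp ρkp hρkp0 hρkpS Vp hVp0 hVpS n μp,
      value_as_trajectory_sum Pm pm gm ρm hρm ρkm hρkm0 hρkmS Vm hVm0 hVmS n μm,
      ← Finset.sum_add_distrib, ← Finset.sum_add_distrib, ← Finset.sum_sub_distrib]
  refine Finset.sum_congr rfl fun k _ => ?_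
  have key : ∀ (A B c pd : X → ℝ),
      (∑ x, A x * (c x + pd x))
        = (∑ x, A x * pd x) + (∑ x, (A x - B x) * c x) + ∑ x, B x * c x := by
    intro A B c pd
    rw [← Finset.sum_add_distrib, ← Finset.sum_add_distrib]
    exact Finset.sum_congr rfl fun x _ => by ring
  have ep := key (fun x => ∑ x₀, μp x₀ * ρkp k x₀ x) (fun x => ∑ x₀, μp x₀ * ρ₀kp k x₀ x)
      cp (fun x => pp x * Δp x)
  have em := key (fun x => ∑ x₀, μm x₀ * ρkm k x₀ x) (fun x => ∑ x₀, μm x₀ * ρ₀km k x₀ x)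
      cm (fun x => pm x * Δm x)
  simp only [hrp, hrm]
  rw [ep, em]
  ring
end

section
/- Let μ : X → ℝ be an initial distribution with μ x ≥ 0 and ∑_x μ x = 1, and define the k-step state visitation distribution ν_k(x) = ∑_{x₀} μ x₀ · ρ^k(x₀,x). Then for every n, the expected direct impact of the policy equals the visitation-weighted expectation of the treatment probability times the benefit: ∑_x μ x · (V n x − V_PS n x) = ∑_{k=0}^{n−1} ∑_x ν_k(x) · (p x) · Δ(x). -/
open Finset

/-- the expected direct impact of the policy equals the
visitation-weighted expectation of the treatment probability times the
benefit:
`∑_x μ x · (V n x − V_PS n x) = ∑_{k<n} ∑_x ν_k(x) · (p x) · Δ(x)`,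
where `ν_k(x) = ∑_{x₀} μ x₀ · ρ^k(x₀,x)`. -/
theorem expected_direct_impact {X : Type*} [Fintype X] [Nonempty X] [DecidableEq X]
    -- transition kernel
    (P : X → Bool → X → ℝ)
    (hPnonneg : ∀ (x : X) (d : Bool) (x' : X), 0 ≤ P x d x')
    (hPsum : ∀ (x : X) (d : Bool), ∑ x', P x d x' = 1)
    -- policy
    (p : X → ℝ) (hp0 : ∀ x, 0 ≤ p x) (hp1 : ∀ x, p x ≤ 1)
    -- qualification gain function
    (g : X → X → ℝ)
    -- one-step mixed kernel
    (ρ : X → X → ℝ)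
    (hρ : ∀ x x', ρ x x' = (1 - p x) * P x false x' + p x * P x true x')
    -- benefit and baseline one-step gain
    (Δ : X → ℝ) (hΔ : ∀ x, Δ x = ∑ x', (P x true x' - P x false x') * g x x')
    (c : X → ℝ) (hc : ∀ x, c x = ∑ x', P x false x' * g x x')
    -- k-step kernels
    (ρk : ℕ → X → X → ℝ)
    (hρk0 : ∀ x x', ρk 0 x x' = if x = x' then 1 else 0)
    (hρkS : ∀ (k : ℕ) (x x' : X), ρk (k + 1) x x' = ∑ y, ρ x y * ρk k y x')
    -- finite-horizon state value function
    (V : ℕ → X → ℝ) (hV0 : ∀ x, V 0 x = 0)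
    (hVS : ∀ (n : ℕ) (x : X), V (n + 1) x
      = ∑ d : Bool, (if d then p x else 1 - p x) * ∑ x', P x d x' * (g x x' + V n x'))
    -- path-specific value function
    (VPS : ℕ → X → ℝ) (hVPS0 : ∀ x, VPS 0 x = 0)
    (hVPSS : ∀ (n : ℕ) (x : X), VPS (n + 1) x = c x + ∑ x', ρ x x' * VPS n x')
    -- initial distribution and state visitation distributions
    (μ : X → ℝ) (hμ0 : ∀ x, 0 ≤ μ x) (hμ1 : ∑ x, μ x = 1)
    (ν : ℕ → X → ℝ) (hν : ∀ (k : ℕ) (x : X), ν k x = ∑ x₀, μ x₀ * ρk k x₀ x) :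
    ∀ n : ℕ,
      ∑ x, μ x * (V n x - VPS n x)
        = ∑ k ∈ Finset.range n, ∑ x, ν k x * (p x * Δ x) := by
  -- generic sum-swap helper
  have swap : ∀ (w : X → ℝ) (m : ℕ),
      ∑ x0, w x0 * ∑ k ∈ Finset.range m, ∑ y, ρk k x0 y * (p y * Δ y)
        = ∑ k ∈ Finset.range m, ∑ y, (∑ x0, w x0 * ρk k x0 y) * (p y * Δ y) := by
    intro w m
    simp only [Finset.mul_sum]
    rw [Finset.sum_comm]
    refine Finset.sum_congr rfl fun k _ => ?_
    rw [Finset.sum_comm]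
    refine Finset.sum_congr rfl fun y _ => ?_
    rw [Finset.sum_mul]
    exact Finset.sum_congr rfl fun x0 _ => by ring
  -- difference recurrence
  have hD : ∀ (n : ℕ) (x : X),
      V n x - VPS n x = ∑ k ∈ Finset.range n, ∑ y, ρk k x y * (p y * Δ y) := by
    intro n
    induction n with
    | zero => intro x; simp [hV0, hVPS0]
    | succ n ih =>
      intro x
      have hV' : V (n + 1) x = p x * Δ x + c x + ∑ x', ρ x x' * V n x' := by
        rw [hVS]
        simp only [Fintype.sum_bool, eq_self_iff_true, if_true, Bool.false_eq_true,
          if_false]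
        rw [Finset.mul_sum, Finset.mul_sum, ← Finset.sum_add_distrib]
        have key : ∀ x',
            p x * (P x true x' * (g x x' + V n x'))
              + (1 - p x) * (P x false x' * (g x x' + V n x'))
            = p x * ((P x true x' - P x false x') * g x x')
              + P x false x' * g x x'
              + ((1 - p x) * P x false x' + p x * P x true x') * V n x' := by
          intro x'; ring
        rw [Finset.sum_congr rfl (fun x' _ => key x'), Finset.sum_add_distrib,
          Finset.sum_add_distrib, ← Finset.mul_sum, ← hΔ x, ← hc x]
        congr 1
        exact Finset.sum_congr rfl fun x' _ => by rw [hρ]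
      have hstep : V (n + 1) x - VPS (n + 1) x
          = p x * Δ x + ∑ x', ρ x x' * (V n x' - VPS n x') := by
        rw [hV', hVPSS]
        simp only [mul_sub, Finset.sum_sub_distrib]
        ring
      rw [hstep]
      have hmid : ∑ x', ρ x x' * (V n x' - VPS n x')
          = ∑ k ∈ Finset.range n, ∑ y, ρk (k + 1) x y * (p y * Δ y) := by
        rw [Finset.sum_congr rfl fun x' _ => by rw [ih x'], swap (ρ x) n]
        exact Finset.sum_congr rfl fun k _ => Finset.sum_congr rfl fun y _ => by
          rw [hρkS]
      rw [hmid, Finset.sum_range_succ']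
      have h0 : ∑ y, ρk 0 x y * (p y * Δ y) = p x * Δ x := by
        simp [hρk0]
      rw [h0]
      ring
  intro n
  rw [Finset.sum_congr rfl fun x _ => by rw [hD n x], swap μ n]
  exact Finset.sum_congr rfl fun k _ => Finset.sum_congr rfl fun y _ => by rw [hν]
end

section
/- Let X be a finite nonempty type, let ν⁺, ν⁻ : X → ℝ be state visitation weights, let Δ⁺, Δ⁻ : X → ℝ be benefit functions, and let h : ℝ → ℝ be a common function such that the positive-decision probabilities satisfy p⁺ x = h (Δ⁺ x) and p⁻ x = h (Δ⁻ x) for all x (benefit fairness: individuals from different groups with equal benefit receive the positive decision with equal probability). Suppose the state visitation distributions in terms of benefit are identical across groups, i.e., for every r ∈ ℝ, ∑_{x : Δ⁺ x = r} ν⁺ x = ∑_{x : Δ⁻ x = r} ν⁻ x. Then the Direct Policy Effect vanishes: ∑_x ν⁺ x · (p⁺ x) · (Δ⁺ x) = ∑_x ν⁻ x · (p⁻ x) · (Δ⁻ x). -/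
open Finset

/-- under benefit fairness (the positive-decision probability in
each group is a common function `h` of the benefit), if the state visitation
distributions in terms of benefit are identical across the groups, then the
Direct Policy Effect vanishes. Group `s⁺` data carries suffix `p`, group `s⁻`
suffix `m`. -/
theorem benefit_fairness_zero_DPE {X : Type*} [Fintype X] [Nonempty X]
    (νp νm : X → ℝ) (Δp Δm : X → ℝ) (pp pm : X → ℝ) (h : ℝ → ℝ)
    (hppf : ∀ x, pp x = h (Δp x)) (hpmf : ∀ x, pm x = h (Δm x))
    (hvis : ∀ r : ℝ,
      (∑ x ∈ Finset.univ.filter (fun x => Δp x = r), νp x)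
        = ∑ x ∈ Finset.univ.filter (fun x => Δm x = r), νm x) :
    ∑ x, νp x * (pp x * Δp x) = ∑ x, νm x * (pm x * Δm x) := by
  classical
  set T : Finset ℝ := (Finset.univ.image Δp) ∪ (Finset.univ.image Δm) with hT
  have hmapp : ∀ x ∈ (Finset.univ : Finset X), Δp x ∈ T := by
    intro x _; simp [hT]
  have hmapm : ∀ x ∈ (Finset.univ : Finset X), Δm x ∈ T := by
    intro x _; simp [hT]
  calc ∑ x, νp x * (pp x * Δp x)
      = ∑ r ∈ T, ∑ x ∈ Finset.univ.filter (fun x => Δp x = r),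
          νp x * (pp x * Δp x) := (Finset.sum_fiberwise_of_maps_to hmapp _).symm
    _ = ∑ r ∈ T, (h r * r) * ∑ x ∈ Finset.univ.filter (fun x => Δp x = r), νp x := by
        refine Finset.sum_congr rfl fun r _ => ?_
        rw [Finset.mul_sum]
        refine Finset.sum_congr rfl fun x hx => ?_
        simp only [Finset.mem_filter] at hx
        rw [hppf, hx.2]; ring
    _ = ∑ r ∈ T, (h r * r) * ∑ x ∈ Finset.univ.filter (fun x => Δm x = r), νm x := by
        simp only [hvis]
    _ = ∑ r ∈ T, ∑ x ∈ Finset.univ.filter (fun x => Δm x = r),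
          νm x * (pm x * Δm x) := by
        refine Finset.sum_congr rfl fun r _ => ?_
        rw [Finset.mul_sum]
        refine Finset.sum_congr rfl fun x hx => ?_
        simp only [Finset.mem_filter] at hx
        rw [hpmf, hx.2]; ring
    _ = ∑ x, νm x * (pm x * Δm x) := Finset.sum_fiberwise_of_maps_to hmapm _
end

section
/- Let the policy be parametrized by θ ∈ ℝ via p : ℝ → X → ℝ with 0 ≤ p θ x ≤ 1 for all θ, x, and with θ ↦ p θ x differentiable for every x. Then for every n ∈ ℕ, x ∈ X, and θ ∈ ℝ, the value function θ ↦ V n θ x is differentiable and its derivative satisfies the finite-horizon policy gradient formula: d/dθ [V n θ x] = ∑_{k=0}^{n−1} ∑_{x'} ρ_θ^k(x,x') · (d/dθ [p θ x']) · (Q (n−k) θ x' true − Q (n−k) θ x' false), where Q m θ x d = ∑_{x'} P x d x' · (g x x' + V (m−1) θ x') is the action value function. -/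
open Finset

/-! The derivative of one Bellman backup splits, by the product rule, into the derivative of the
policy weights, which gives the `k = 0` term `p'(x) (Q(x, d¹) − Q(x, d⁰))`, and the derivative
of the continuation value averaged over the mixed kernel `ρ_θ(x, ·)`. Unrolling this recursion
over the horizon composes the one-step kernels into the `k`-step kernels `ρ_θ^k`. -/

theorem hasDerivAt_bernoulli_mixture {p : ℝ → ℝ} {F : Bool → ℝ → ℝ} {p' θ : ℝ} {F' : Bool → ℝ}
    (hp : HasDerivAt p p' θ) (hF : ∀ d, HasDerivAt (F d) (F' d) θ) :
    HasDerivAt (fun θ => ∑ d : Bool, (if d then p θ else 1 - p θ) * F d θ)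
      (p' * (F true θ - F false θ) + ((1 - p θ) * F' false + p θ * F' true)) θ := by
  simp only [Fintype.sum_bool, if_true, Bool.false_eq_true, if_false]
  exact ((hp.fun_mul (hF true)).fun_add ((hp.const_sub 1).fun_mul (hF false))).congr_deriv
    (by ring)

theorem sum_range_succ_kernelPow_mul {X R : Type*} [Fintype X] [DecidableEq X] [Semiring R]
    (ρ : X → X → R) (ρk : ℕ → X → X → R)
    (h0 : ∀ x x', ρk 0 x x' = if x = x' then 1 else 0)
    (hS : ∀ k x x', ρk (k + 1) x x' = ∑ y, ρ x y * ρk k y x')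
    (c : ℕ → X → R) (n : ℕ) (x : X) :
    ∑ k ∈ range (n + 1), ∑ x', ρk k x x' * c (n + 1 - k) x'
      = c (n + 1) x + ∑ y, ρ x y * ∑ k ∈ range n, ∑ x', ρk k y x' * c (n - k) x' := by
  rw [sum_range_succ', add_comm]
  congr 1
  · simp [h0]
  · simp only [hS, Nat.succ_sub_succ, sum_mul, mul_sum, mul_assoc]
    exact (sum_congr rfl fun k _ => sum_comm).trans sum_comm

theorem policy_gradient_general {X : Type*} [Fintype X] [DecidableEq X]
    -- transition kernel (independent of θ)
    (P : X → Bool → X → ℝ)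
    -- parametrized policy
    (p : ℝ → X → ℝ)
    (hpdiff : ∀ x : X, Differentiable ℝ (fun θ => p θ x))
    -- qualification gain function
    (g : X → X → ℝ)
    -- one-step mixed kernel and k-step kernels, parametrized by θ
    (ρ : ℝ → X → X → ℝ)
    (hρ : ∀ (θ : ℝ) (x x' : X),
      ρ θ x x' = (1 - p θ x) * P x false x' + p θ x * P x true x')
    (ρk : ℝ → ℕ → X → X → ℝ)
    (hρk0 : ∀ (θ : ℝ) (x x' : X), ρk θ 0 x x' = if x = x' then 1 else 0)
    (hρkS : ∀ (θ : ℝ) (k : ℕ) (x x' : X),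
      ρk θ (k + 1) x x' = ∑ y, ρ θ x y * ρk θ k y x')
    -- finite-horizon state value function
    (V : ℕ → ℝ → X → ℝ) (hV0 : ∀ (θ : ℝ) (x : X), V 0 θ x = 0)
    (hVS : ∀ (n : ℕ) (θ : ℝ) (x : X), V (n + 1) θ x
      = ∑ d : Bool, (if d then p θ x else 1 - p θ x)
          * ∑ x', P x d x' * (g x x' + V n θ x'))
    -- action value function
    (Q : ℕ → ℝ → X → Bool → ℝ)
    (hQ : ∀ (m : ℕ) (θ : ℝ) (x : X) (d : Bool),
      Q m θ x d = ∑ x', P x d x' * (g x x' + V (m - 1) θ x')) :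
    ∀ (n : ℕ) (x : X) (θ : ℝ),
      HasDerivAt (fun θ => V n θ x)
        (∑ k ∈ Finset.range n, ∑ x',
          ρk θ k x x' * deriv (fun θ => p θ x') θ
            * (Q (n - k) θ x' true - Q (n - k) θ x' false)) θ := by
  intro n
  induction n with
  | zero => intro x θ; simpa [hV0] using hasDerivAt_const θ (0 : ℝ)
  | succ n ih =>
    intro x θ
    set c : ℕ → X → ℝ := fun m y => deriv (fun θ => p θ y) θ * (Q m θ y true - Q m θ y false)
    set D : X → ℝ := fun y => ∑ k ∈ range n, ∑ x', ρk θ k y x' * c (n - k) x'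
    have hstep : HasDerivAt (fun θ => V (n + 1) θ x) (c (n + 1) x + ∑ y, ρ θ x y * D y) θ := by
      have hD : ∀ y, HasDerivAt (fun θ => V n θ y) (D y) θ := fun y => by
        simpa only [mul_assoc] using ih y θ
      simp only [hVS]
      refine (hasDerivAt_bernoulli_mixture (hpdiff x θ).hasDerivAt fun d =>
        HasDerivAt.fun_sum fun y _ => ((hD y).const_add (g x y)).const_mul (P x d y)).congr_deriv ?_
      simp only [c, hQ, Nat.add_sub_cancel, hρ, add_mul, mul_assoc, sum_add_distrib, mul_sum]
    simp only [mul_assoc]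
    rwa [sum_range_succ_kernelPow_mul (ρ θ) (ρk θ) (hρk0 θ) (hρkS θ) c]

/-- finite-horizon policy gradient formula. For a policy
parametrized by `θ ∈ ℝ`, the value function `θ ↦ V n θ x` is differentiable
with derivative
`∑_{k<n} ∑_{x'} ρ_θ^k(x,x') · (d/dθ p θ x') · (Q (n−k) θ x' true − Q (n−k) θ x' false)`. -/
theorem policy_gradient {X : Type*} [Fintype X] [Nonempty X] [DecidableEq X]
    -- transition kernel (independent of θ)
    (P : X → Bool → X → ℝ)
    (hPnonneg : ∀ (x : X) (d : Bool) (x' : X), 0 ≤ P x d x')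
    (hPsum : ∀ (x : X) (d : Bool), ∑ x', P x d x' = 1)
    -- parametrized policy
    (p : ℝ → X → ℝ)
    (hp0 : ∀ (θ : ℝ) (x : X), 0 ≤ p θ x) (hp1 : ∀ (θ : ℝ) (x : X), p θ x ≤ 1)
    (hpdiff : ∀ x : X, Differentiable ℝ (fun θ => p θ x))
    -- qualification gain function
    (g : X → X → ℝ)
    -- one-step mixed kernel and k-step kernels, parametrized by θ
    (ρ : ℝ → X → X → ℝ)
    (hρ : ∀ (θ : ℝ) (x x' : X),
      ρ θ x x' = (1 - p θ x) * P x false x' + p θ x * P x true x')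
    (ρk : ℝ → ℕ → X → X → ℝ)
    (hρk0 : ∀ (θ : ℝ) (x x' : X), ρk θ 0 x x' = if x = x' then 1 else 0)
    (hρkS : ∀ (θ : ℝ) (k : ℕ) (x x' : X),
      ρk θ (k + 1) x x' = ∑ y, ρ θ x y * ρk θ k y x')
    -- finite-horizon state value function
    (V : ℕ → ℝ → X → ℝ) (hV0 : ∀ (θ : ℝ) (x : X), V 0 θ x = 0)
    (hVS : ∀ (n : ℕ) (θ : ℝ) (x : X), V (n + 1) θ x
      = ∑ d : Bool, (if d then p θ x else 1 - p θ x)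
          * ∑ x', P x d x' * (g x x' + V n θ x'))
    -- action value function
    (Q : ℕ → ℝ → X → Bool → ℝ)
    (hQ : ∀ (m : ℕ) (θ : ℝ) (x : X) (d : Bool),
      Q m θ x d = ∑ x', P x d x' * (g x x' + V (m - 1) θ x')) :
    ∀ (n : ℕ) (x : X) (θ : ℝ),
      HasDerivAt (fun θ => V n θ x)
        (∑ k ∈ Finset.range n, ∑ x',
          ρk θ k x x' * deriv (fun θ => p θ x') θ
            * (Q (n - k) θ x' true - Q (n - k) θ x' false)) θ :=
  policy_gradient_general P p hpdiff g ρ hρ ρk hρk0 hρkS V hV0 hVS Q hQ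
end

section
/- Under the two-group θ-parametrized setup, define the qualification gain disparity C_n(θ) = ∑_x μ⁺ x · V⁺ n θ x − ∑_x μ⁻ x · V⁻ n θ x. Then for every n and θ, the derivative of the squared disparity satisfies d/dθ [C_n(θ)²] = α_n(θ) · (Γ⁺_n(θ) − Γ⁻_n(θ)), where α_n(θ) = 2·C_n(θ) and, for each group s ∈ {+, −}, Γ^s_n(θ) = ∑_{k=0}^{n−1} ∑_x (μ^s (ρ^s_θ)^k)(x) · (d/dθ [p^s θ x]) · (Q^s (n−k) θ x true − Q^s (n−k) θ x false), with (μρ^k)(x) = ∑_{x₀} μ x₀ · ρ^k(x₀,x) and Q^s m θ x d = ∑_{x'} P^s x d x' · (g^s x x' + V^s (m−1) θ x'). -/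
/-!
Differentiating the Bellman recursion `V_{n+1} = p Q_{n+1}(·, d¹) + (1 - p) Q_{n+1}(·, d⁰)` shows
that `∂V_n` solves a recursion of the same shape,
`D_{n+1} = p' (Q_{n+1}(·, d¹) - Q_{n+1}(·, d⁰)) + ρ D_n`.
Unrolling it and averaging against `μ` weights the source term at horizon `n - k` by the
state distribution `μ ρ^k`. The squared disparity then follows from the chain rule.
-/

open Finset

section

variable {X : Type*} [Fintype X]

noncomputable def bellmanSum (ρ : X → X → ℝ) (a : ℕ → X → ℝ) : ℕ → X → ℝ
  | 0, _ => 0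
  | n + 1, x => a (n + 1) x + ∑ x', ρ x x' * bellmanSum ρ a n x'

lemma sum_mul_kernelPow_succ {ρ : X → X → ℝ} {ρk : ℕ → X → X → ℝ}
    (hρkS : ∀ k x x', ρk (k + 1) x x' = ∑ y, ρ x y * ρk k y x') (μ : X → ℝ) (k : ℕ) (x : X) :
    ∑ x₀, (∑ y, μ y * ρ y x₀) * ρk k x₀ x = ∑ x₀, μ x₀ * ρk (k + 1) x₀ x := by
  simp_rw [hρkS, mul_sum, sum_mul, ← mul_assoc]
  exact sum_comm

lemma sum_mul_bellmanSum [DecidableEq X] {ρ : X → X → ℝ} {ρk : ℕ → X → X → ℝ}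
    (hρk0 : ∀ x x', ρk 0 x x' = if x = x' then 1 else 0)
    (hρkS : ∀ k x x', ρk (k + 1) x x' = ∑ y, ρ x y * ρk k y x')
    (a : ℕ → X → ℝ) (n : ℕ) (μ : X → ℝ) :
    ∑ x, μ x * bellmanSum ρ a n x
      = ∑ k ∈ range n, ∑ x, (∑ x₀, μ x₀ * ρk k x₀ x) * a (n - k) x := by
  induction n generalizing μ with
  | zero => simp [bellmanSum]
  | succ n ih =>
    have hsource : ∑ x, μ x * a (n + 1) x = ∑ x, (∑ x₀, μ x₀ * ρk 0 x₀ x) * a (n + 1 - 0) x := by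
      simp [hρk0]
    have hpush : ∑ x, μ x * ∑ x', ρ x x' * bellmanSum ρ a n x'
        = ∑ x', (∑ x, μ x * ρ x x') * bellmanSum ρ a n x' := by
      simp_rw [mul_sum, sum_mul, ← mul_assoc]
      exact sum_comm
    simp only [bellmanSum, mul_add, sum_add_distrib]
    rw [sum_range_succ', hsource, hpush, ih, add_comm]
    simp only [sum_mul_kernelPow_succ hρkS, Nat.succ_sub_succ]

noncomputable def policyGradientSource (p : ℝ → X → ℝ) (Q : ℕ → ℝ → X → Bool → ℝ) (θ : ℝ) (m : ℕ)
    (x : X) : ℝ :=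
  deriv (fun θ => p θ x) θ * (Q m θ x true - Q m θ x false)

variable {P : X → Bool → X → ℝ} {p : ℝ → X → ℝ} {g : X → X → ℝ} {V : ℕ → ℝ → X → ℝ}
  {Q : ℕ → ℝ → X → Bool → ℝ}

lemma hasDerivAt_value {θ : ℝ} (hpdiff : ∀ x, DifferentiableAt ℝ (fun θ => p θ x) θ)
    {ρ : X → X → ℝ} (hρ : ∀ x x', ρ x x' = (1 - p θ x) * P x false x' + p θ x * P x true x')
    (hV0 : ∀ θ x, V 0 θ x = 0)
    (hVS : ∀ n θ x, V (n + 1) θ x = ∑ d : Bool, (if d then p θ x else 1 - p θ x)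
        * ∑ x', P x d x' * (g x x' + V n θ x'))
    (hQ : ∀ m θ x d, Q m θ x d = ∑ x', P x d x' * (g x x' + V (m - 1) θ x')) (n : ℕ) (x : X) :
    HasDerivAt (fun θ => V n θ x) (bellmanSum ρ (policyGradientSource p Q θ) n x) θ := by
  induction n generalizing x with
  | zero => simpa only [hV0, bellmanSum] using hasDerivAt_const θ (0 : ℝ)
  | succ n ih =>
    have hV : (fun θ => V (n + 1) θ x)
        = fun θ => p θ x * Q (n + 1) θ x true + (1 - p θ x) * Q (n + 1) θ x false := by
      funext θ
      simp [hVS, hQ]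
    have hQ' (d : Bool) : HasDerivAt (fun θ => Q (n + 1) θ x d)
        (∑ x', P x d x' * bellmanSum ρ (policyGradientSource p Q θ) n x') θ := by
      simp only [hQ, Nat.add_sub_cancel]
      exact HasDerivAt.fun_sum fun x' _ => ((ih x').const_add (g x x')).const_mul (P x d x')
    have hp := (hpdiff x).hasDerivAt
    rw [hV]
    refine ((hp.fun_mul (hQ' true)).fun_add
      (((hasDerivAt_const θ 1).fun_sub hp).fun_mul (hQ' false))).congr_deriv ?_
    simp only [bellmanSum, policyGradientSource, hρ, add_mul, sum_add_distrib,
      mul_sum, mul_assoc]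
    ring

theorem hasDerivAt_expectedValue [DecidableEq X] {θ : ℝ}
    (hpdiff : ∀ x, DifferentiableAt ℝ (fun θ => p θ x) θ)
    {ρ : X → X → ℝ} (hρ : ∀ x x', ρ x x' = (1 - p θ x) * P x false x' + p θ x * P x true x')
    {ρk : ℕ → X → X → ℝ} (hρk0 : ∀ x x', ρk 0 x x' = if x = x' then 1 else 0)
    (hρkS : ∀ k x x', ρk (k + 1) x x' = ∑ y, ρ x y * ρk k y x')
    (hV0 : ∀ θ x, V 0 θ x = 0)
    (hVS : ∀ n θ x, V (n + 1) θ x = ∑ d : Bool, (if d then p θ x else 1 - p θ x)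
        * ∑ x', P x d x' * (g x x' + V n θ x'))
    (hQ : ∀ m θ x d, Q m θ x d = ∑ x', P x d x' * (g x x' + V (m - 1) θ x')) (μ : X → ℝ) (n : ℕ) :
    HasDerivAt (fun θ => ∑ x, μ x * V n θ x)
      (∑ k ∈ range n, ∑ x, (∑ x₀, μ x₀ * ρk k x₀ x) * deriv (fun θ => p θ x) θ
          * (Q (n - k) θ x true - Q (n - k) θ x false)) θ := by
  have h := HasDerivAt.fun_sum fun x (_ : x ∈ univ) =>
    (hasDerivAt_value hpdiff hρ hV0 hVS hQ n x).const_mul (μ x)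
  simpa only [sum_mul_bellmanSum hρk0 hρkS, policyGradientSource, mul_assoc] using h

end

theorem squared_disparity_gradient_general {X : Type*} [Fintype X] [DecidableEq X]
    -- group s⁺ : kernel, parametrized policy, gain, initial distribution
    (Pp : X → Bool → X → ℝ)
    (pp : ℝ → X → ℝ)
    (hppdiff : ∀ x : X, Differentiable ℝ (fun θ => pp θ x))
    (gp : X → X → ℝ)
    (μp : X → ℝ)
    -- group s⁻ : kernel, parametrized policy, gain, initial distribution
    (Pm : X → Bool → X → ℝ)
    (pm : ℝ → X → ℝ)
    (hpmdiff : ∀ x : X, Differentiable ℝ (fun θ => pm θ x))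
    (gm : X → X → ℝ)
    (μm : X → ℝ)
    -- one-step mixed kernels and k-step kernels, parametrized by θ
    (ρp : ℝ → X → X → ℝ)
    (hρp : ∀ (θ : ℝ) (x x' : X),
      ρp θ x x' = (1 - pp θ x) * Pp x false x' + pp θ x * Pp x true x')
    (ρkp : ℝ → ℕ → X → X → ℝ)
    (hρkp0 : ∀ (θ : ℝ) (x x' : X), ρkp θ 0 x x' = if x = x' then 1 else 0)
    (hρkpS : ∀ (θ : ℝ) (k : ℕ) (x x' : X),
      ρkp θ (k + 1) x x' = ∑ y, ρp θ x y * ρkp θ k y x')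
    (ρm : ℝ → X → X → ℝ)
    (hρm : ∀ (θ : ℝ) (x x' : X),
      ρm θ x x' = (1 - pm θ x) * Pm x false x' + pm θ x * Pm x true x')
    (ρkm : ℝ → ℕ → X → X → ℝ)
    (hρkm0 : ∀ (θ : ℝ) (x x' : X), ρkm θ 0 x x' = if x = x' then 1 else 0)
    (hρkmS : ∀ (θ : ℝ) (k : ℕ) (x x' : X),
      ρkm θ (k + 1) x x' = ∑ y, ρm θ x y * ρkm θ k y x')
    -- finite-horizon state value functions
    (Vp : ℕ → ℝ → X → ℝ) (hVp0 : ∀ (θ : ℝ) (x : X), Vp 0 θ x = 0)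
    (hVpS : ∀ (n : ℕ) (θ : ℝ) (x : X), Vp (n + 1) θ x
      = ∑ d : Bool, (if d then pp θ x else 1 - pp θ x)
          * ∑ x', Pp x d x' * (gp x x' + Vp n θ x'))
    (Vm : ℕ → ℝ → X → ℝ) (hVm0 : ∀ (θ : ℝ) (x : X), Vm 0 θ x = 0)
    (hVmS : ∀ (n : ℕ) (θ : ℝ) (x : X), Vm (n + 1) θ x
      = ∑ d : Bool, (if d then pm θ x else 1 - pm θ x)
          * ∑ x', Pm x d x' * (gm x x' + Vm n θ x'))
    -- action value functions
    (Qp : ℕ → ℝ → X → Bool → ℝ)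
    (hQp : ∀ (m : ℕ) (θ : ℝ) (x : X) (d : Bool),
      Qp m θ x d = ∑ x', Pp x d x' * (gp x x' + Vp (m - 1) θ x'))
    (Qm : ℕ → ℝ → X → Bool → ℝ)
    (hQm : ∀ (m : ℕ) (θ : ℝ) (x : X) (d : Bool),
      Qm m θ x d = ∑ x', Pm x d x' * (gm x x' + Vm (m - 1) θ x'))
    -- qualification gain disparity
    (C : ℕ → ℝ → ℝ)
    (hC : ∀ (n : ℕ) (θ : ℝ),
      C n θ = (∑ x, μp x * Vp n θ x) - ∑ x, μm x * Vm n θ x) :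
    ∀ (n : ℕ) (θ : ℝ),
      HasDerivAt (fun θ => (C n θ) ^ 2)
        ((2 * C n θ) *
          ((∑ k ∈ Finset.range n, ∑ x,
              (∑ x₀, μp x₀ * ρkp θ k x₀ x) * deriv (fun θ => pp θ x) θ
                * (Qp (n - k) θ x true - Qp (n - k) θ x false))
            - ∑ k ∈ Finset.range n, ∑ x,
                (∑ x₀, μm x₀ * ρkm θ k x₀ x) * deriv (fun θ => pm θ x) θ
                  * (Qm (n - k) θ x true - Qm (n - k) θ x false))) θ := by
  intro n θ
  have hCp := hasDerivAt_expectedValue (hppdiff · θ) (hρp θ) (hρkp0 θ) (hρkpS θ) hVp0 hVpS hQp μp n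
  have hCm := hasDerivAt_expectedValue (hpmdiff · θ) (hρm θ) (hρkm0 θ) (hρkmS θ) hVm0 hVmS hQm μm n
  have hC' : (fun θ => C n θ) = fun θ => (∑ x, μp x * Vp n θ x) - ∑ x, μm x * Vm n θ x :=
    funext (hC n)
  refine ((hC' ▸ hCp.fun_sub hCm).fun_pow 2).congr_deriv ?_
  push_cast
  ring

/-- gradient of the squared qualification gain disparity in the
two-group θ-parametrized setup:
`d/dθ [C_n(θ)²] = α_n(θ) · (Γ⁺_n(θ) − Γ⁻_n(θ))` with `α_n(θ) = 2·C_n(θ)`.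
Group `s⁺` data carries suffix `p`, group `s⁻` suffix `m`. -/
theorem squared_disparity_gradient {X : Type*} [Fintype X] [Nonempty X] [DecidableEq X]
    -- group s⁺ : kernel, parametrized policy, gain, initial distribution
    (Pp : X → Bool → X → ℝ)
    (hPpnonneg : ∀ (x : X) (d : Bool) (x' : X), 0 ≤ Pp x d x')
    (hPpsum : ∀ (x : X) (d : Bool), ∑ x', Pp x d x' = 1)
    (pp : ℝ → X → ℝ)
    (hpp0 : ∀ (θ : ℝ) (x : X), 0 ≤ pp θ x) (hpp1 : ∀ (θ : ℝ) (x : X), pp θ x ≤ 1)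
    (hppdiff : ∀ x : X, Differentiable ℝ (fun θ => pp θ x))
    (gp : X → X → ℝ)
    (μp : X → ℝ) (hμp0 : ∀ x, 0 ≤ μp x) (hμp1 : ∑ x, μp x = 1)
    -- group s⁻ : kernel, parametrized policy, gain, initial distribution
    (Pm : X → Bool → X → ℝ)
    (hPmnonneg : ∀ (x : X) (d : Bool) (x' : X), 0 ≤ Pm x d x')
    (hPmsum : ∀ (x : X) (d : Bool), ∑ x', Pm x d x' = 1)
    (pm : ℝ → X → ℝ)
    (hpm0 : ∀ (θ : ℝ) (x : X), 0 ≤ pm θ x) (hpm1 : ∀ (θ : ℝ) (x : X), pm θ x ≤ 1)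
    (hpmdiff : ∀ x : X, Differentiable ℝ (fun θ => pm θ x))
    (gm : X → X → ℝ)
    (μm : X → ℝ) (hμm0 : ∀ x, 0 ≤ μm x) (hμm1 : ∑ x, μm x = 1)
    -- one-step mixed kernels and k-step kernels, parametrized by θ
    (ρp : ℝ → X → X → ℝ)
    (hρp : ∀ (θ : ℝ) (x x' : X),
      ρp θ x x' = (1 - pp θ x) * Pp x false x' + pp θ x * Pp x true x')
    (ρkp : ℝ → ℕ → X → X → ℝ)
    (hρkp0 : ∀ (θ : ℝ) (x x' : X), ρkp θ 0 x x' = if x = x' then 1 else 0)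
    (hρkpS : ∀ (θ : ℝ) (k : ℕ) (x x' : X),
      ρkp θ (k + 1) x x' = ∑ y, ρp θ x y * ρkp θ k y x')
    (ρm : ℝ → X → X → ℝ)
    (hρm : ∀ (θ : ℝ) (x x' : X),
      ρm θ x x' = (1 - pm θ x) * Pm x false x' + pm θ x * Pm x true x')
    (ρkm : ℝ → ℕ → X → X → ℝ)
    (hρkm0 : ∀ (θ : ℝ) (x x' : X), ρkm θ 0 x x' = if x = x' then 1 else 0)
    (hρkmS : ∀ (θ : ℝ) (k : ℕ) (x x' : X),
      ρkm θ (k + 1) x x' = ∑ y, ρm θ x y * ρkm θ k y x')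
    -- finite-horizon state value functions
    (Vp : ℕ → ℝ → X → ℝ) (hVp0 : ∀ (θ : ℝ) (x : X), Vp 0 θ x = 0)
    (hVpS : ∀ (n : ℕ) (θ : ℝ) (x : X), Vp (n + 1) θ x
      = ∑ d : Bool, (if d then pp θ x else 1 - pp θ x)
          * ∑ x', Pp x d x' * (gp x x' + Vp n θ x'))
    (Vm : ℕ → ℝ → X → ℝ) (hVm0 : ∀ (θ : ℝ) (x : X), Vm 0 θ x = 0)
    (hVmS : ∀ (n : ℕ) (θ : ℝ) (x : X), Vm (n + 1) θ x
      = ∑ d : Bool, (if d then pm θ x else 1 - pm θ x)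
          * ∑ x', Pm x d x' * (gm x x' + Vm n θ x'))
    -- action value functions
    (Qp : ℕ → ℝ → X → Bool → ℝ)
    (hQp : ∀ (m : ℕ) (θ : ℝ) (x : X) (d : Bool),
      Qp m θ x d = ∑ x', Pp x d x' * (gp x x' + Vp (m - 1) θ x'))
    (Qm : ℕ → ℝ → X → Bool → ℝ)
    (hQm : ∀ (m : ℕ) (θ : ℝ) (x : X) (d : Bool),
      Qm m θ x d = ∑ x', Pm x d x' * (gm x x' + Vm (m - 1) θ x'))
    -- qualification gain disparity
    (C : ℕ → ℝ → ℝ)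
    (hC : ∀ (n : ℕ) (θ : ℝ),
      C n θ = (∑ x, μp x * Vp n θ x) - ∑ x, μm x * Vm n θ x) :
    ∀ (n : ℕ) (θ : ℝ),
      HasDerivAt (fun θ => (C n θ) ^ 2)
        ((2 * C n θ) *
          ((∑ k ∈ Finset.range n, ∑ x,
              (∑ x₀, μp x₀ * ρkp θ k x₀ x) * deriv (fun θ => pp θ x) θ
                * (Qp (n - k) θ x true - Qp (n - k) θ x false))
            - ∑ k ∈ Finset.range n, ∑ x,
                (∑ x₀, μm x₀ * ρkm θ k x₀ x) * deriv (fun θ => pm θ x) θ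
                  * (Qm (n - k) θ x true - Qm (n - k) θ x false))) θ :=
  squared_disparity_gradient_general Pp pp hppdiff gp μp Pm pm hpmdiff gm μm ρp hρp ρkp hρkp0 hρkpS
    ρm hρm ρkm hρkm0 hρkmS Vp hVp0 hVpS Vm hVm0 hVmS Qp hQp Qm hQm C hC
end
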